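/- arXiv:2008.08054 — 2 statements merged into one kernel-verified Lean document; each statement's English description precedes it below -/
import Mathlib

section
/- Let G be a connected multigraph with a one-level hierarchy given by a partition P whose blocks induce connected subgraphs. If a spanning tree t of G is such that its quotient Q(t) by P is a spanning tree of G/P, then for every block B of P the restriction of t to G[B] is a spanning tree of G[B]. -/
/-- A multigraph: vertices, edges, and an (ordered) pair of endpoints per edge. -/
structure Multigraph where
  V : Type
  E : Type
  ends : E → V × V

namespace Multigraph

variable (G : Multigraph)

/-- Two vertices are joined by some edge from the edge set `S`. -/
def Adj (S : Set G.E) (a b : G.V) : Prop :=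
  ∃ e ∈ S, G.ends e = (a, b) ∨ G.ends e = (b, a)

/-- The edge set `S` connects the whole vertex set of `G`. -/
def Connects (S : Set G.E) : Prop :=
  ∀ a b : G.V, Relation.ReflTransGen (G.Adj S) a b

/-- `S` is a spanning tree of `G`: it connects `G` and is minimal with this property. -/
def IsSpanningTree (S : Set G.E) : Prop :=
  G.Connects S ∧ ∀ e ∈ S, ¬ G.Connects (S \ {e})

/-- The number of spanning trees of `G`. -/
noncomputable def tau : ℕ := Nat.card {S : Set G.E // G.IsSpanningTree S}

/-- The induced sub-multigraph on the block `π ⁻¹' {b}`. -/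
def induced {B : Type} (π : G.V → B) (b : B) : Multigraph where
  V := {v : G.V // π v = b}
  E := {e : G.E // π (G.ends e).1 = b ∧ π (G.ends e).2 = b}
  ends e := (⟨(G.ends e.1).1, e.2.1⟩, ⟨(G.ends e.1).2, e.2.2⟩)

/-- The quotient multigraph of `G` by the block map `π`: one vertex per block, one
edge per edge of `G` joining two distinct blocks (parallel edges retained). -/
def quot {B : Type} (π : G.V → B) : Multigraph where
  V := B
  E := {e : G.E // π (G.ends e).1 ≠ π (G.ends e).2}
  ends e := (π (G.ends e.1).1, π (G.ends e.1).2)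

/-- The edges of `S` crossing between distinct blocks, viewed as edges of the quotient. -/
def crossing {B : Type} (π : G.V → B) (S : Set G.E) : Set (G.quot π).E :=
  {e : {e : G.E // π (G.ends e).1 ≠ π (G.ends e).2} | e.1 ∈ S}

/-- The restriction of the edge set `S` to the block `b`. -/
def restrict {B : Type} (π : G.V → B) (b : B) (S : Set G.E) : Set (G.induced π b).E :=
  {e : {e : G.E // π (G.ends e).1 = b ∧ π (G.ends e).2 = b} | e.1 ∈ S}

/-- `S` is a hierarchical spanning tree with respect to blocks `π`: it is a spanning
tree of `G` whose quotient is a spanning tree of the quotient multigraph. -/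
def IsHierarchical {B : Type} (π : G.V → B) (S : Set G.E) : Prop :=
  G.IsSpanningTree S ∧ (G.quot π).IsSpanningTree (G.crossing π S)

/-- The induced sub-multigraph on a vertex subset `U`. -/
def inducedOn (U : Set G.V) : Multigraph where
  V := U
  E := {e : G.E | (G.ends e).1 ∈ U ∧ (G.ends e).2 ∈ U}
  ends e := (⟨(G.ends e.1).1, e.2.1⟩, ⟨(G.ends e.1).2, e.2.2⟩)

/-- Edge `e` crosses between the two distinct blocks `b` and `b'`. -/
def Crosses {B : Type} (π : G.V → B) (e : G.E) (b b' : B) : Prop :=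
  (π (G.ends e).1 = b ∧ π (G.ends e).2 = b') ∨ (π (G.ends e).1 = b' ∧ π (G.ends e).2 = b)

end Multigraph

namespace Multigraph

variable {G : Multigraph}

/-- Edge `e` goes from `a` to `b` in some orientation. -/
def Step (G : Multigraph) (e : G.E) (a b : G.V) : Prop :=
  G.ends e = (a, b) ∨ G.ends e = (b, a)

/-- Walks recorded by their list of edges. -/
def IsWalk (G : Multigraph) (S : Set G.E) : G.V → List G.E → G.V → Prop
  | a, [], c => a = c
  | a, e :: l, c => e ∈ S ∧ ∃ x, G.Step e a x ∧ G.IsWalk S x l c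

lemma adj_symm {S : Set G.E} : Symmetric (G.Adj S) := by
  rintro a b ⟨e, he, h | h⟩
  · exact ⟨e, he, Or.inr h⟩
  · exact ⟨e, he, Or.inl h⟩

lemma rtg_symm {S : Set G.E} {a b : G.V} (h : Relation.ReflTransGen (G.Adj S) a b) :
    Relation.ReflTransGen (G.Adj S) b a := by
  induction h with
  | refl => exact .refl
  | tail _ hadj ih => exact Relation.ReflTransGen.head (adj_symm hadj) ih

lemma isWalk_append {S : Set G.E} {a b c : G.V} {l : List G.E} {e : G.E}
    (hw : G.IsWalk S a l b) (he : e ∈ S) (hs : G.Step e b c) :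
    G.IsWalk S a (l ++ [e]) c := by
  induction l generalizing a with
  | nil => cases hw; exact ⟨he, c, hs, rfl⟩
  | cons g l ih =>
    obtain ⟨hg, x, hx, hw⟩ := hw
    exact ⟨hg, x, hx, ih hw⟩

lemma rtg_iff_walk {S : Set G.E} {a b : G.V} :
    Relation.ReflTransGen (G.Adj S) a b ↔ ∃ l, G.IsWalk S a l b := by
  constructor
  · intro h
    induction h with
    | refl => exact ⟨[], rfl⟩
    | tail _ hadj ih =>
      obtain ⟨l, hl⟩ := ih
      obtain ⟨e, he, hor⟩ := hadj
      exact ⟨l ++ [e], isWalk_append hl he hor⟩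
  · rintro ⟨l, hl⟩
    induction l generalizing a with
    | nil => exact hl ▸ Relation.ReflTransGen.refl
    | cons e l ih =>
      obtain ⟨he, x, hx, hw⟩ := hl
      exact Relation.ReflTransGen.head ⟨e, he, hx⟩ (ih hw)

lemma connects_mono {S S' : Set G.E}
    (h : ∀ a b, G.Adj S a b → Relation.ReflTransGen (G.Adj S') a b)
    (hc : G.Connects S) : G.Connects S' := by
  intro a b
  induction hc a b with
  | refl => exact .refl
  | tail _ hadj ih => exact ih.trans (h _ _ hadj)

lemma spanningTree_not_conn {S : Set G.E} (hS : G.IsSpanningTree S) {e : G.E} (he : e ∈ S) :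
    ¬ Relation.ReflTransGen (G.Adj (S \ {e})) (G.ends e).1 (G.ends e).2 := by
  intro h
  refine hS.2 e he (connects_mono (fun a b hadj => ?_) hS.1)
  obtain ⟨g, hg, hor⟩ := hadj
  by_cases hge : g = e
  · subst hge
    rcases hor with h1 | h1
    · rw [h1] at h; exact h
    · rw [h1] at h; exact rtg_symm h
  · exact Relation.ReflTransGen.single ⟨g, ⟨hg, hge⟩, hor⟩

lemma find_edge {S : Set G.E} {e : G.E} {B : Type} {π : G.V → B} {Cb : B → Prop}
    (hstep : ∀ g ∈ S, g ≠ e → ∀ a c : G.V, G.Step g a c → (Cb (π a) ↔ Cb (π c))) :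
    ∀ (l : List G.E) (a v : G.V), G.IsWalk S a l v → ¬ Cb (π a) → Cb (π v) →
    ∃ l1 l2 w w', l = l1 ++ e :: l2 ∧ G.IsWalk S a l1 w ∧ G.Step e w w' ∧
      G.IsWalk S w' l2 v := by
  intro l
  induction l with
  | nil => intro a v hw ha hv; cases hw; exact absurd hv ha
  | cons g l ih =>
    intro a v hw ha hv
    obtain ⟨hg, x, hx, hwl⟩ := hw
    by_cases hge : g = e
    · subst hge
      exact ⟨[], l, a, x, rfl, rfl, hx, hwl⟩
    · have hax : ¬ Cb (π x) := fun h => ha ((hstep g hg hge a x hx).mpr h)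
      obtain ⟨l1, l2, w, w', hsplit, h1, h2, h3⟩ := ih x v hwl hax hv
      exact ⟨g :: l1, l2, w, w', by rw [hsplit]; rfl, ⟨hg, x, hx, h1⟩, h2, h3⟩

lemma walk_to_intra {B : Type} {π : G.V → B} {S : Set G.E}
    (hQ : (G.quot π).IsSpanningTree (G.crossing π S)) (b : B) :
    ∀ (n : ℕ) (l : List G.E), l.length ≤ n → ∀ u v : G.V, G.IsWalk S u l v →
      π u = b → π v = b →
      Relation.ReflTransGen
        (G.Adj (S ∩ {e | π (G.ends e).1 = b ∧ π (G.ends e).2 = b})) u v := by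
  intro n
  induction n with
  | zero =>
    intro l hl u v hw hu hv
    match l, hl, hw with
    | [], _, hw => exact hw ▸ Relation.ReflTransGen.refl
  | succ m ih =>
    intro l hl u v hw hu hv
    match l, hl, hw with
    | [], _, hw => exact hw ▸ Relation.ReflTransGen.refl
    | e :: l', hl, hw =>
      obtain ⟨heS, x, hx, hwl⟩ := hw
      by_cases hxb : π x = b
      · have hintra : π (G.ends e).1 = b ∧ π (G.ends e).2 = b := by
          rcases hx with h | h <;> rw [h] <;> exact ⟨by assumption, by assumption⟩
        refine Relation.ReflTransGen.head ⟨e, ⟨heS, hintra⟩, hx⟩ ?_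
        exact ih l' (Nat.le_of_succ_le_succ hl) x v hwl hxb hv
      · have hcr : π (G.ends e).1 ≠ π (G.ends e).2 := by
          rcases hx with h | h <;> rw [h]
          · rw [hu]; exact fun hh => hxb hh.symm
          · exact fun hh => hxb (hh.trans hu)
        set eQ : (G.quot π).E := ⟨e, hcr⟩ with heQdef
        have heQmem : eQ ∈ G.crossing π S := heS
        have hne : ¬ Relation.ReflTransGen ((G.quot π).Adj (G.crossing π S \ {eQ}))
            (π (G.ends e).1) (π (G.ends e).2) :=
          spanningTree_not_conn hQ heQmem
        set Cb : B → Prop :=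
          fun y => Relation.ReflTransGen ((G.quot π).Adj (G.crossing π S \ {eQ})) b y
          with hCbdef
        have hCbx : ¬ Cb (π x) := by
          rcases hx with h | h
          · have h1 : π (G.ends e).1 = b := by rw [h]; exact hu
            have h2 : π (G.ends e).2 = π x := by rw [h]
            rw [h1, h2] at hne
            exact hne
          · have h1 : π (G.ends e).1 = π x := by rw [h]
            have h2 : π (G.ends e).2 = b := by rw [h]; exact hu
            rw [h1, h2] at hne
            exact fun hh => hne (rtg_symm hh)
        have hCbstep : ∀ g ∈ S, g ≠ e → ∀ a c : G.V, G.Step g a c →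
            (Cb (π a) ↔ Cb (π c)) := by
          intro g hgS hge a c hsg
          by_cases hac : π a = π c
          · rw [hac]
          · have hgcr : π (G.ends g).1 ≠ π (G.ends g).2 := by
              rcases hsg with h | h <;> rw [h]
              · exact hac
              · exact fun hh => hac hh.symm
            have hmem : (⟨g, hgcr⟩ : (G.quot π).E) ∈ G.crossing π S \ {eQ} :=
              ⟨hgS, fun hh => hge (congrArg Subtype.val hh)⟩
            have hadj : (G.quot π).Adj (G.crossing π S \ {eQ}) (π a) (π c) := by
              refine ⟨⟨g, hgcr⟩, hmem, ?_⟩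
              rcases hsg with h | h
              · left; show (π (G.ends g).1, π (G.ends g).2) = (π a, π c); rw [h]
              · right; show (π (G.ends g).1, π (G.ends g).2) = (π c, π a); rw [h]
            exact ⟨fun hh => hh.tail hadj, fun hh => hh.tail (adj_symm hadj)⟩
        have hCbv : Cb (π v) := by rw [hv]; exact Relation.ReflTransGen.refl
        obtain ⟨l1, l2, w, w', hsplit, hw1, hstep2, hw2⟩ :=
          find_edge hCbstep l' x v hwl hCbx hCbv
        have hlen : l2.length + 1 ≤ m := by
          have : (e :: l').length ≤ m + 1 := hl
          rw [hsplit] at this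
          simp [List.length_append] at this
          omega
        rcases hx with h1 | h1 <;> rcases hstep2 with h2 | h2
        · -- ends e = (u,x) = (w,w')
          have hww : w = u ∧ w' = x := by
            have := h1.symm.trans h2
            exact ⟨(Prod.mk.injEq _ _ _ _ ▸ this).1.symm,
                   (Prod.mk.injEq _ _ _ _ ▸ this).2.symm⟩
          refine ih (e :: l2) hlen u v ⟨heS, x, Or.inl h1, ?_⟩ hu hv
          rw [← hww.2]; exact hw2
        · -- ends e = (u,x) = (w',w) : w' = u
          have hww : w' = u := by
            have := h1.symm.trans h2
            exact ((Prod.mk.injEq _ _ _ _ ▸ this).1).symm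
          exact ih l2 (Nat.le_of_succ_le hlen) u v (hww ▸ hw2) hu hv
        · -- ends e = (x,u) = (w,w') : w' = u
          have hww : w' = u := by
            have := h1.symm.trans h2
            exact ((Prod.mk.injEq _ _ _ _ ▸ this).2).symm
          exact ih l2 (Nat.le_of_succ_le hlen) u v (hww ▸ hw2) hu hv
        · -- ends e = (x,u) = (w',w) : w' = x
          have hww : w' = x := by
            have := h1.symm.trans h2
            exact ((Prod.mk.injEq _ _ _ _ ▸ this).1).symm
          refine ih (e :: l2) hlen u v ⟨heS, x, Or.inr h1, ?_⟩ hu hv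
          rw [← hww]; exact hw2

lemma intra_to_induced {B : Type} {π : G.V → B} {b : B} {S : Set G.E}
    {u v : G.V} (hu : π u = b) (hv : π v = b)
    (h : Relation.ReflTransGen
      (G.Adj (S ∩ {e | π (G.ends e).1 = b ∧ π (G.ends e).2 = b})) u v) :
    Relation.ReflTransGen ((G.induced π b).Adj (G.restrict π b S)) ⟨u, hu⟩ ⟨v, hv⟩ := by
  induction h with
  | refl => exact .refl
  | @tail x v' hprev hadj ih =>
    obtain ⟨e, ⟨heS, hI⟩, hor⟩ := hadj
    have hx : π x = b := by
      rcases hor with h | h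
      · have := hI.1; rw [h] at this; exact this
      · have := hI.2; rw [h] at this; exact this
    have hv' : π v' = b := hv
    refine (ih hx).tail ?_
    refine ⟨⟨e, hI⟩, heS, ?_⟩
    rcases hor with h | h
    · left
      show (⟨(G.ends e).1, hI.1⟩, ⟨(G.ends e).2, hI.2⟩) =
        ((⟨x, hx⟩ : (G.induced π b).V), (⟨v', hv⟩ : (G.induced π b).V))
      have h1 : (G.ends e).1 = x := by rw [h]
      have h2 : (G.ends e).2 = v' := by rw [h]
      subst h1; subst h2; rfl
    · right
      show (⟨(G.ends e).1, hI.1⟩, ⟨(G.ends e).2, hI.2⟩) =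
        ((⟨v', hv⟩ : (G.induced π b).V), (⟨x, hx⟩ : (G.induced π b).V))
      have h1 : (G.ends e).1 = v' := by rw [h]
      have h2 : (G.ends e).2 = x := by rw [h]
      subst h1; subst h2; rfl

lemma induced_to_base {B : Type} {π : G.V → B} {b : B} {T : Set (G.induced π b).E}
    {U : Set G.E} (hTU : ∀ f ∈ T, f.1 ∈ U) {x y : (G.induced π b).V}
    (h : Relation.ReflTransGen ((G.induced π b).Adj T) x y) :
    Relation.ReflTransGen (G.Adj U) x.1 y.1 := by
  induction h with
  | tail hprev hadj ih =>
    obtain ⟨f, hf, hor⟩ := hadj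
    refine ih.tail ⟨f.1, hTU f hf, ?_⟩
    rcases hor with h | h
    · left
      have h1 := congrArg (fun p => p.1.1) h
      have h2 := congrArg (fun p => p.2.1) h
      exact Prod.ext h1 h2
    · right
      have h1 := congrArg (fun p => p.1.1) h
      have h2 := congrArg (fun p => p.2.1) h
      exact Prod.ext h1 h2
  | refl => exact .refl

end Multigraph

open Multigraph in
/-- If the quotient of a spanning tree `S` of `G` by the block map `π` is a spanning
tree of the quotient multigraph, then the restriction of `S` to each block is a
spanning tree of the induced sub-multigraph of that block. -/
theorem restriction_isSpanningTree (G : Multigraph) [Finite G.V] [Finite G.E]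
    {B : Type} [Fintype B] (π : G.V → B)
    (hsurj : Function.Surjective π)
    (hconn : G.Connects Set.univ)
    (hblocks : ∀ b : B, (G.induced π b).Connects Set.univ)
    (S : Set G.E)
    (hS : G.IsSpanningTree S)
    (hQ : (G.quot π).IsSpanningTree (G.crossing π S)) :
    ∀ b : B, (G.induced π b).IsSpanningTree (G.restrict π b S) := by
  intro b
  constructor
  · rintro ⟨u, hu⟩ ⟨v, hv⟩
    obtain ⟨l, hw⟩ := Multigraph.rtg_iff_walk.mp (hS.1 u v)
    exact Multigraph.intra_to_induced hu hv
      (Multigraph.walk_to_intra hQ b l.length l le_rfl u v hw hu hv)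
  · rintro f hf hc
    refine hS.2 f.1 hf ?_
    refine Multigraph.connects_mono (fun a c hadj => ?_) hS.1
    obtain ⟨g, hg, hor⟩ := hadj
    by_cases hgf : g = f.1
    · subst hgf
      have key : Relation.ReflTransGen (G.Adj (S \ {(f.1 : G.E)}))
          (G.ends f.1).1 (G.ends f.1).2 := by
        have h := hc ⟨(G.ends f.1).1, f.2.1⟩ ⟨(G.ends f.1).2, f.2.2⟩
        refine Multigraph.induced_to_base (U := S \ {(f.1 : G.E)}) ?_ h
        intro k hk
        exact ⟨hk.1, fun he => hk.2 (Subtype.ext he)⟩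
      rcases hor with h1 | h1
      · rw [h1] at key; exact key
      · rw [h1] at key; exact Multigraph.rtg_symm key
    · exact .single ⟨g, ⟨hg, hgf⟩, hor⟩
end

section
/- Multilevel hierarchical tree count: let G be a connected graph with nested hierarchy of quotient multigraphs H_0 = G, H_1, ..., H_ℓ where every vertex v of H_n (n ≥ 1) has connected preimage Q^{-1}(v) in H_{n-1}. Then the number of hierarchical spanning trees of G equals τ(H_ℓ) · ∏_{n=1}^{ℓ} ∏_{v ∈ V(H_n)} τ(Q^{-1}(v)), where τ counts spanning trees of multigraphs and Q^{-1}(v) is the sub-multigraph of H_{n-1} induced by the preimage of v. -/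
/-! ### Auxiliary development -/

namespace Multigraph

open Relation

variable {G : Multigraph} {B : Type} {π : G.V → B}

lemma Adj.symm' {S : Set G.E} {a b : G.V} (h : G.Adj S a b) : G.Adj S b a := by
  obtain ⟨e, he, hh⟩ := h
  exact ⟨e, he, hh.symm⟩

lemma reach_symm {S : Set G.E} {a b : G.V} (h : ReflTransGen (G.Adj S) a b) :
    ReflTransGen (G.Adj S) b a :=
  by
    induction h with
    | refl => exact .refl
    | tail _ hbc ih => exact ReflTransGen.head hbc.symm' ih

/-- Walks of a given length. -/
def WalkN (G : Multigraph) (S : Set G.E) : ℕ → G.V → G.V → Prop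
  | 0, a, b => a = b
  | n+1, a, b => ∃ c, G.Adj S a c ∧ WalkN G S n c b

lemma reach_iff_walkN {S : Set G.E} {a b : G.V} :
    ReflTransGen (G.Adj S) a b ↔ ∃ n, G.WalkN S n a b := by
  constructor
  · intro h
    induction h using ReflTransGen.head_induction_on with
    | refl => exact ⟨0, rfl⟩
    | head h' _ ih =>
      obtain ⟨n, hn⟩ := ih
      exact ⟨n + 1, _, h', hn⟩
  · rintro ⟨n, hn⟩
    induction n generalizing a with
    | zero => exact hn ▸ .refl
    | succ n ih =>
      obtain ⟨c, hac, hcb⟩ := hn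
      exact ReflTransGen.head hac (ih hcb)

lemma reach_project {S : Set G.E} {a b : G.V} (h : ReflTransGen (G.Adj S) a b) :
    ReflTransGen ((G.quot π).Adj (G.crossing π S)) (π a) (π b) := by
  induction h with
  | refl => exact .refl
  | @tail x y hxy h2 ih =>
    obtain ⟨e, he, hh⟩ := h2
    by_cases hc : π (G.ends e).1 = π (G.ends e).2
    · have hxy' : π x = π y := by
        rcases hh with h' | h' <;> rw [h'] at hc
        · exact hc
        · exact hc.symm
      exact hxy' ▸ ih
    · refine ih.tail ⟨⟨e, hc⟩, he, ?_⟩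
      rcases hh with h' | h'
      · left; show (π (G.ends e).1, π (G.ends e).2) = _; rw [h']; rfl
      · right; show (π (G.ends e).1, π (G.ends e).2) = _; rw [h']; rfl

lemma adj_embed {S : Set G.E} {b0 : B} {x y : (G.induced π b0).V}
    (h : (G.induced π b0).Adj (G.restrict π b0 S) x y) : G.Adj S x.1 y.1 := by
  obtain ⟨e, he, hh⟩ := h
  refine ⟨e.1, he, ?_⟩
  rcases hh with h' | h'
  · exact Or.inl (Prod.ext (congrArg (fun p => p.1.1) h') (congrArg (fun p => p.2.1) h'))
  · exact Or.inr (Prod.ext (congrArg (fun p => p.1.1) h') (congrArg (fun p => p.2.1) h'))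

lemma reach_embed {S : Set G.E} {b0 : B} {x y : (G.induced π b0).V}
    (h : ReflTransGen ((G.induced π b0).Adj (G.restrict π b0 S)) x y) :
    ReflTransGen (G.Adj S) x.1 y.1 :=
  ReflTransGen.lift Subtype.val (fun _ _ h => adj_embed h) _ _ h

lemma connects_of_reach_ends {S : Set G.E} (hS : G.Connects S) {e : G.E}
    (h : ReflTransGen (G.Adj (S \ {e})) (G.ends e).1 (G.ends e).2) :
    G.Connects (S \ {e}) := by
  have step : ∀ x y, G.Adj S x y → ReflTransGen (G.Adj (S \ {e})) x y := by
    rintro x y ⟨e', he', hh⟩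
    by_cases hee : e' = e
    · subst hee
      rcases hh with h' | h' <;> rw [h'] at h
      · exact h
      · exact reach_symm h
    · exact ReflTransGen.single ⟨e', ⟨he', hee⟩, hh⟩
  intro x y
  have hxy := hS x y
  induction hxy with
  | refl => exact .refl
  | tail _ h2 ih => exact ih.trans (step _ _ h2)

lemma not_reach_ends_of_minimal {H : Multigraph} {T : Set H.E} (hc : H.Connects T)
    (hmin : ∀ t ∈ T, ¬ H.Connects (T \ {t})) {t : H.E} (ht : t ∈ T) :
    ¬ ReflTransGen (H.Adj (T \ {t})) (H.ends t).1 (H.ends t).2 :=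
  fun h => hmin t ht (connects_of_reach_ends hc h)

lemma return_lemma {S : Set G.E} {t : (G.quot π).E} {a : G.V}
    (hat : (G.ends t.1).1 = a ∨ (G.ends t.1).2 = a) {y0 : B}
    (hna : ¬ ReflTransGen ((G.quot π).Adj (G.crossing π S \ {t})) y0 (π a)) :
    ∀ n c b, G.WalkN S n c b →
      ReflTransGen ((G.quot π).Adj (G.crossing π S \ {t})) y0 (π c) →
      ¬ ReflTransGen ((G.quot π).Adj (G.crossing π S \ {t})) y0 (π b) →
      ∃ m, m < n ∧ G.WalkN S m a b := by
  intro n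
  induction n with
  | zero =>
    intro c b hw hc hb
    exact absurd (hw ▸ hc) hb
  | succ n ih =>
    rintro c b ⟨d, hcd, hdb⟩ hc hb
    obtain ⟨e, he, hh⟩ := hcd
    by_cases hcr : π (G.ends e).1 = π (G.ends e).2
    · have hpd : π c = π d := by
        rcases hh with h' | h' <;> rw [h'] at hcr
        · exact hcr
        · exact hcr.symm
      obtain ⟨m, hm, hw⟩ := ih d b hdb (hpd ▸ hc) hb
      exact ⟨m, hm.trans (Nat.lt_succ_self n), hw⟩
    · by_cases htt : (⟨e, hcr⟩ : (G.quot π).E) = t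
      · have hte : t.1 = e := by rw [← htt]
        rw [hte] at hat
        have had : a = c ∨ a = d := by
          rcases hh with h' | h' <;> rcases hat with h2 | h2 <;> rw [h'] at h2
          · exact Or.inl h2.symm
          · exact Or.inr h2.symm
          · exact Or.inr h2.symm
          · exact Or.inl h2.symm
        rcases had with h' | h'
        · exact absurd (h' ▸ hc) hna
        · exact ⟨n, Nat.lt_succ_self n, h' ▸ hdb⟩
      · have hstep : (G.quot π).Adj (G.crossing π S \ {t}) (π c) (π d) := by
          refine ⟨⟨e, hcr⟩, ⟨he, htt⟩, ?_⟩
          rcases hh with h' | h'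
          · left; show (π (G.ends e).1, π (G.ends e).2) = _; rw [h']; rfl
          · right; show (π (G.ends e).1, π (G.ends e).2) = _; rw [h']; rfl
        obtain ⟨m, hm, hw⟩ := ih d b hdb (hc.tail hstep) hb
        exact ⟨m, hm.trans (Nat.lt_succ_self n), hw⟩

lemma adj_restrict {S : Set G.E} {a c : G.V} (h : G.Adj S a c) {b0 : B}
    (ha : π a = b0) (hc : π c = b0) :
    (G.induced π b0).Adj (G.restrict π b0 S) ⟨a, ha⟩ ⟨c, hc⟩ := by
  obtain ⟨e, he, hh⟩ := h
  rcases hh with h' | h'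
  · have h1 : π (G.ends e).1 = b0 := by rw [congrArg Prod.fst h']; exact ha
    have h2 : π (G.ends e).2 = b0 := by rw [congrArg Prod.snd h']; exact hc
    refine ⟨⟨e, h1, h2⟩, he, Or.inl ?_⟩
    show ((⟨(G.ends e).1, h1⟩ : (G.induced π b0).V), (⟨(G.ends e).2, h2⟩ : (G.induced π b0).V)) = _
    refine Prod.ext_iff.mpr ?_
    exact ⟨Subtype.ext (congrArg Prod.fst h'), Subtype.ext (congrArg Prod.snd h')⟩
  · have h1 : π (G.ends e).1 = b0 := by rw [congrArg Prod.fst h']; exact hc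
    have h2 : π (G.ends e).2 = b0 := by rw [congrArg Prod.snd h']; exact ha
    refine ⟨⟨e, h1, h2⟩, he, Or.inr ?_⟩
    show ((⟨(G.ends e).1, h1⟩ : (G.induced π b0).V), (⟨(G.ends e).2, h2⟩ : (G.induced π b0).V)) = _
    refine Prod.ext_iff.mpr ?_
    exact ⟨Subtype.ext (congrArg Prod.fst h'), Subtype.ext (congrArg Prod.snd h')⟩

lemma key_lemma {S : Set G.E} (hT : (G.quot π).IsSpanningTree (G.crossing π S)) {b0 : B} :
    ∀ n a b, G.WalkN S n a b → ∀ (ha : π a = b0) (hb : π b = b0),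
      ReflTransGen ((G.induced π b0).Adj (G.restrict π b0 S)) ⟨a, ha⟩ ⟨b, hb⟩ := by
  intro n
  induction n using Nat.strong_induction_on with
  | _ n IH =>
    match n with
    | 0 =>
      intro a b hw ha hb
      cases hw
      exact .refl
    | (n+1) =>
      rintro a b ⟨c, hac, hcb⟩ ha hb
      by_cases hc : π c = b0
      · exact ReflTransGen.head (adj_restrict hac ha hc)
          (IH n (Nat.lt_succ_self n) c b hcb hc hb)
      · obtain ⟨e, he, hh⟩ := hac
        have hcr : π (G.ends e).1 ≠ π (G.ends e).2 := by
          rcases hh with h' | h' <;> rw [h']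
          · simp only []
            intro hx
            exact hc ((congrArg π (rfl : c = c)) ▸ (ha ▸ hx) ▸ rfl)
          · intro hx
            exact hc (hx.symm ▸ ha)
        have ht : (⟨e, hcr⟩ : (G.quot π).E) ∈ G.crossing π S := he
        have hbr := not_reach_ends_of_minimal hT.1 hT.2 ht
        -- hbr : ¬ RTG (π (G.ends e).1) (π (G.ends e).2) over crossing S \ {t}
        have hna : ¬ ReflTransGen ((G.quot π).Adj (G.crossing π S \ {⟨e, hcr⟩}))
            (π c) (π a) := by
          rcases hh with h' | h'
          · have h1 : (G.ends e).1 = a := congrArg Prod.fst h'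
            have h2 : (G.ends e).2 = c := congrArg Prod.snd h'
            rw [← h1, ← h2]
            exact fun hx => hbr (reach_symm hx)
          · have h1 : (G.ends e).1 = c := congrArg Prod.fst h'
            have h2 : (G.ends e).2 = a := congrArg Prod.snd h'
            rw [← h1, ← h2]
            exact hbr
        have hat : (G.ends (⟨e, hcr⟩ : (G.quot π).E).1).1 = a ∨
            (G.ends (⟨e, hcr⟩ : (G.quot π).E).1).2 = a := by
          rcases hh with h' | h'
          · exact Or.inl (congrArg Prod.fst h')
          · exact Or.inr (congrArg Prod.snd h')
        obtain ⟨m, hm, hw⟩ := return_lemma hat hna n c b hcb .refl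
          (by rw [hb, ← ha]; exact hna)
        exact IH m (hm.trans (Nat.lt_succ_self n)) a b hw ha hb

/-! ### Gluing -/

lemma connects_lift {S : Set G.E}
    (hR : ∀ b', (G.induced π b').Connects (G.restrict π b' S)) :
    ∀ x y : B, ReflTransGen ((G.quot π).Adj (G.crossing π S)) x y →
      ∀ a b : G.V, π a = x → π b = y → ReflTransGen (G.Adj S) a b := by
  intro x y h
  induction h with
  | refl =>
    intro a b hax hbx
    exact reach_embed (hR (π a) ⟨a, rfl⟩ ⟨b, by rw [hbx, ← hax]⟩)
  | @tail y z _ h2 ih =>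
    intro a b hax hbz
    obtain ⟨t, htS, hh⟩ := h2
    rcases hh with h' | h'
    · have h1 : π (G.ends t.1).1 = y := congrArg Prod.fst h'
      have h2' : π (G.ends t.1).2 = z := congrArg Prod.snd h'
      have r1 := ih a (G.ends t.1).1 hax h1
      have r2 : G.Adj S (G.ends t.1).1 (G.ends t.1).2 := ⟨t.1, htS, Or.inl rfl⟩
      have r3 : ReflTransGen (G.Adj S) (G.ends t.1).2 b :=
        reach_embed (hR z ⟨_, h2'⟩ ⟨b, hbz⟩)
      exact (r1.tail r2).trans r3
    · have h1 : π (G.ends t.1).1 = z := congrArg Prod.fst h'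
      have h2' : π (G.ends t.1).2 = y := congrArg Prod.snd h'
      have r1 := ih a (G.ends t.1).2 hax h2'
      have r2 : G.Adj S (G.ends t.1).2 (G.ends t.1).1 := ⟨t.1, htS, Or.inr rfl⟩
      have r3 : ReflTransGen (G.Adj S) (G.ends t.1).1 b :=
        reach_embed (hR z ⟨_, h1⟩ ⟨b, hbz⟩)
      exact (r1.tail r2).trans r3

lemma crossing_diff_cross {S : Set G.E} {e : G.E} (h : π (G.ends e).1 ≠ π (G.ends e).2) :
    G.crossing π (S \ {e}) = G.crossing π S \ {(⟨e, h⟩ : (G.quot π).E)} := by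
  ext t
  simp only [crossing, Set.mem_setOf_eq, Set.mem_diff, Set.mem_singleton_iff]
  exact and_congr_right fun _ => by
    constructor
    · intro h1 h2; exact h1 (by rw [h2])
    · intro h1 h2; exact h1 (Subtype.ext h2)

lemma crossing_diff_inblock {S : Set G.E} {e : G.E} (h : π (G.ends e).1 = π (G.ends e).2) :
    G.crossing π (S \ {e}) = G.crossing π S := by
  ext t
  simp only [crossing, Set.mem_setOf_eq, Set.mem_diff, Set.mem_singleton_iff]
  constructor
  · exact fun h1 => h1.1
  · exact fun h1 => ⟨h1, fun h2 => t.2 (h2 ▸ h)⟩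

lemma restrict_diff {S : Set G.E} {b0 : B} (e : (G.induced π b0).E) :
    G.restrict π b0 (S \ {e.1}) = G.restrict π b0 S \ {e} := by
  ext t
  simp only [restrict, Set.mem_setOf_eq, Set.mem_diff, Set.mem_singleton_iff]
  exact and_congr_right fun _ => by
    constructor
    · intro h1 h2; exact h1 (by rw [h2])
    · intro h1 h2; exact h1 (Subtype.ext h2)

/-- The one-level decomposition criterion. -/
lemma lemmaA_iff (hsurj : Function.Surjective π) {S : Set G.E}
    (hT : (G.quot π).IsSpanningTree (G.crossing π S)) :
    G.IsSpanningTree S ↔ ∀ b, (G.induced π b).IsSpanningTree (G.restrict π b S) := by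
  constructor
  · intro hS b
    constructor
    · intro x y
      obtain ⟨n, hw⟩ := reach_iff_walkN.mp (hS.1 x.1 y.1)
      exact key_lemma hT n x.1 y.1 hw x.2 y.2
    · intro e he hcon
      rw [← restrict_diff] at hcon
      have hreach := reach_embed (hcon ⟨(G.ends e.1).1, e.2.1⟩ ⟨(G.ends e.1).2, e.2.2⟩)
      exact hS.2 e.1 he (connects_of_reach_ends hS.1 hreach)
  · intro hR
    constructor
    · intro a b
      exact connects_lift (fun b' => (hR b').1) (π a) (π b) (hT.1 (π a) (π b)) a b rfl rfl
    · intro e he hcon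
      by_cases hcr : π (G.ends e).1 = π (G.ends e).2
      · have hmin := (hR (π (G.ends e).1)).2 ⟨e, rfl, hcr.symm⟩ he
        apply hmin
        refine cast (congrArg (G.induced π (π (G.ends e).1)).Connects
          (restrict_diff (S := S) (b0 := π (G.ends e).1) ⟨e, rfl, hcr.symm⟩)) ?_
        have hT' : (G.quot π).IsSpanningTree (G.crossing π (S \ {e})) := by
          rwa [crossing_diff_inblock hcr]
        intro x y
        obtain ⟨n, hw⟩ := reach_iff_walkN.mp (hcon x.1 y.1)
        exact key_lemma hT' n x.1 y.1 hw x.2 y.2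
      · have ht : (⟨e, hcr⟩ : (G.quot π).E) ∈ G.crossing π S := he
        obtain ⟨x, y, hxy⟩ : ∃ x y, ¬ ReflTransGen
            ((G.quot π).Adj (G.crossing π S \ {(⟨e, hcr⟩ : (G.quot π).E)})) x y := by
          by_contra hall
          push_neg at hall
          exact hT.2 _ ht fun x y => hall x y
        obtain ⟨ax, hax⟩ := hsurj x
        obtain ⟨bx, hbx⟩ := hsurj y
        apply hxy
        have hpr := reach_project (π := π) (hcon ax bx)
        rw [crossing_diff_cross hcr] at hpr
        rwa [hax, hbx] at hpr

open Classical in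
/-- Recombine a quotient edge set and block edge sets into an edge set of `G`. -/
def glue (G : Multigraph) {B : Type} (π : G.V → B) (T : Set (G.quot π).E)
    (R : ∀ b, Set (G.induced π b).E) : Set G.E :=
  {e | if h : π (G.ends e).1 = π (G.ends e).2 then
      (⟨e, rfl, h.symm⟩ : (G.induced π (π (G.ends e).1)).E) ∈ R (π (G.ends e).1)
    else (⟨e, h⟩ : (G.quot π).E) ∈ T}

lemma crossing_glue {T : Set (G.quot π).E} {R : ∀ b, Set (G.induced π b).E} :
    G.crossing π (G.glue π T R) = T := by
  ext t
  obtain ⟨e, hcr⟩ := t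
  show e ∈ G.glue π T R ↔ _
  rw [glue, Set.mem_setOf_eq, dif_neg hcr]
  exact Iff.rfl

lemma restrict_glue {T : Set (G.quot π).E} {R : ∀ b, Set (G.induced π b).E} {b : B} :
    G.restrict π b (G.glue π T R) = R b := by
  ext t
  obtain ⟨e, h1, h2⟩ := t
  subst h1
  show e ∈ G.glue π T R ↔ _
  rw [glue, Set.mem_setOf_eq, dif_pos h2.symm]
  exact Iff.rfl

lemma glue_eq_self {S : Set G.E} :
    G.glue π (G.crossing π S) (fun b => G.restrict π b S) = S := by
  ext e
  rw [glue, Set.mem_setOf_eq]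
  split <;> exact Iff.rfl

/-- The one-level decomposition equivalence, with an extra predicate on the
quotient part carried along. -/
noncomputable def lemmaA_equiv (hsurj : Function.Surjective π)
    (Extra : Set (G.quot π).E → Prop) :
    {S : Set G.E // (G.IsSpanningTree S ∧
        (G.quot π).IsSpanningTree (G.crossing π S)) ∧ Extra (G.crossing π S)} ≃
      {T : Set (G.quot π).E // (G.quot π).IsSpanningTree T ∧ Extra T} ×
        (∀ b, {R : Set (G.induced π b).E // (G.induced π b).IsSpanningTree R}) where
  toFun S :=
    (⟨G.crossing π S.1, S.2.1.2, S.2.2⟩,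
      fun b => ⟨G.restrict π b S.1, (lemmaA_iff hsurj S.2.1.2).mp S.2.1.1 b⟩)
  invFun TR :=
    ⟨G.glue π TR.1.1 (fun b => (TR.2 b).1), by
      have h1 : G.crossing π (G.glue π TR.1.1 (fun b => (TR.2 b).1)) = TR.1.1 :=
        crossing_glue
      have hq : (G.quot π).IsSpanningTree
          (G.crossing π (G.glue π TR.1.1 (fun b => (TR.2 b).1))) := by
        rw [h1]; exact TR.1.2.1
      refine ⟨⟨(lemmaA_iff hsurj hq).mpr fun b => ?_, hq⟩, by rw [h1]; exact TR.1.2.2⟩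
      rw [restrict_glue]
      exact (TR.2 b).2⟩
  left_inv S := Subtype.ext glue_eq_self
  right_inv TR := by
    obtain ⟨T, R⟩ := TR
    refine Prod.ext (Subtype.ext ?_) (funext fun b => Subtype.ext ?_)
    · show G.crossing π (G.glue π T.1 fun b' => (R b').1) = T.1
      exact crossing_glue
    · show G.restrict π b (G.glue π T.1 fun b' => (R b').1) = (R b).1
      exact restrict_glue

/-! ### Transfer along isomorphisms -/

section Iso

variable {H K : Multigraph} (ev : H.V ≃ K.V) (ee : H.E ≃ K.E)
  (hends : ∀ e, K.ends (ee e) = (ev (H.ends e).1, ev (H.ends e).2))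

include hends

lemma adj_map_iff {S : Set H.E} {a b : H.V} :
    K.Adj (ee '' S) (ev a) (ev b) ↔ H.Adj S a b := by
  constructor
  · rintro ⟨e', ⟨e, heS, rfl⟩, hh⟩
    refine ⟨e, heS, ?_⟩
    rw [hends] at hh
    rcases hh with h' | h'
    · left
      have h1 := congrArg Prod.fst h'
      have h2 := congrArg Prod.snd h'
      exact Prod.ext (ev.injective h1) (ev.injective h2)
    · right
      have h1 := congrArg Prod.fst h'
      have h2 := congrArg Prod.snd h'
      exact Prod.ext (ev.injective h1) (ev.injective h2)
  · rintro ⟨e, heS, hh⟩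
    refine ⟨ee e, ⟨e, heS, rfl⟩, ?_⟩
    rw [hends]
    rcases hh with h' | h'
    · left; rw [h']
    · right; rw [h']

lemma connects_map_iff {S : Set H.E} : K.Connects (ee '' S) ↔ H.Connects S := by
  constructor
  · intro h a b
    have h2 := h (ev a) (ev b)
    have key : ∀ x y : K.V, ReflTransGen (K.Adj (ee '' S)) x y →
        ReflTransGen (H.Adj S) (ev.symm x) (ev.symm y) := by
      intro x y hxy
      refine ReflTransGen.lift ev.symm (fun u v huv => ?_) _ _ hxy
      have : K.Adj (ee '' S) (ev (ev.symm u)) (ev (ev.symm v)) := by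
        rwa [ev.apply_symm_apply, ev.apply_symm_apply]
      exact (adj_map_iff ev ee hends).mp this
    have := key _ _ h2
    rwa [ev.symm_apply_apply, ev.symm_apply_apply] at this
  · intro h x y
    have h2 := h (ev.symm x) (ev.symm y)
    have key : ∀ a b : H.V, ReflTransGen (H.Adj S) a b →
        ReflTransGen (K.Adj (ee '' S)) (ev a) (ev b) :=
      fun a b hab => ReflTransGen.lift ev
        (fun u v huv => (adj_map_iff ev ee hends).mpr huv) _ _ hab
    have := key _ _ h2
    rwa [ev.apply_symm_apply, ev.apply_symm_apply] at this

lemma isSpanningTree_map_iff {S : Set H.E} :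
    K.IsSpanningTree (ee '' S) ↔ H.IsSpanningTree S := by
  rw [IsSpanningTree, IsSpanningTree, connects_map_iff ev ee hends]
  refine and_congr_right fun _ => ?_
  constructor
  · intro h e heS
    have := h (ee e) ⟨e, heS, rfl⟩
    rw [← Set.image_singleton, ← Set.image_diff ee.injective,
      connects_map_iff ev ee hends] at this
    exact this
  · rintro h e' ⟨e, heS, rfl⟩
    have := h e heS
    rw [← Set.image_singleton, ← Set.image_diff ee.injective,
      connects_map_iff ev ee hends]
    exact this

lemma tau_congr : H.tau = K.tau := by
  refine Nat.card_congr ((Equiv.Set.congr ee).subtypeEquiv fun S => ?_)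
  exact (isSpanningTree_map_iff ev ee hends).symm

lemma tau_induced_congr {B : Type} (πH : H.V → B) (πK : K.V → B)
    (hπ : ∀ x, πK (ev x) = πH x) (b : B) :
    (H.induced πH b).tau = (K.induced πK b).tau := by
  have hend1 : ∀ e : H.E, (K.ends (ee e)).1 = ev (H.ends e).1 :=
    fun e => congrArg Prod.fst (hends e)
  have hend2 : ∀ e : H.E, (K.ends (ee e)).2 = ev (H.ends e).2 :=
    fun e => congrArg Prod.snd (hends e)
  have hP : ∀ e : H.E, (πH (H.ends e).1 = b ∧ πH (H.ends e).2 = b) ↔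
      (πK (K.ends (ee e)).1 = b ∧ πK (K.ends (ee e)).2 = b) := by
    intro e
    rw [hend1, hend2, hπ, hπ]
  refine tau_congr (H := H.induced πH b) (K := K.induced πK b)
    (ev.subtypeEquiv fun v => by rw [hπ])
    (ee.subtypeEquiv hP) ?_
  rintro ⟨e, h1, h2⟩
  refine Prod.ext (Subtype.ext ?_) (Subtype.ext ?_)
  · exact hend1 e
  · exact hend2 e

end Iso

/-! ### Shifting the hierarchy down one level -/

section Shift

variable {G : Multigraph} {L : ℕ → Type} (p : ∀ n, G.V → L n) (f : ∀ n, L n → L (n + 1))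

/-- The level maps of the shifted hierarchy. -/
def iterMap : ∀ n, L 1 → L (n + 1)
  | 0 => fun x => x
  | (n + 1) => fun x => f (n + 1) (iterMap n x)

variable (hcomp : ∀ n v, p (n + 1) v = f n (p n v))

include hcomp

lemma iterMap_comp : ∀ n x, iterMap f n (p 1 x) = p (n + 1) x := by
  intro n
  induction n with
  | zero => intro x; rfl
  | succ n ih =>
    intro x
    show f (n + 1) (iterMap f n (p 1 x)) = p (n + 2) x
    rw [ih]
    exact (hcomp (n + 1) x).symm

lemma p_succ_ne {e : G.E} {k : ℕ} (h : p (k + 1) (G.ends e).1 ≠ p (k + 1) (G.ends e).2) :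
    p 1 (G.ends e).1 ≠ p 1 (G.ends e).2 := by
  intro h1
  exact h (by rw [← iterMap_comp p f hcomp k, ← iterMap_comp p f hcomp k, h1])

omit hcomp

/-- The edge equivalence between the `(k+1)`-st quotient of `G` and the `k`-th
quotient of the shifted hierarchy. -/
def quotEdgeEquiv (hcomp : ∀ n v, p (n + 1) v = f n (p n v)) (k : ℕ) :
    (G.quot (p (k + 1))).E ≃ ((G.quot (p 1)).quot (iterMap f k)).E where
  toFun e := ⟨⟨e.1, p_succ_ne p f hcomp e.2⟩, by
    show iterMap f k (p 1 (G.ends e.1).1) ≠ iterMap f k (p 1 (G.ends e.1).2)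
    rw [iterMap_comp p f hcomp, iterMap_comp p f hcomp]
    exact e.2⟩
  invFun e' := ⟨e'.1.1, by
    have h2 := e'.2
    rw [show ((G.quot (p 1)).ends e'.1).1 = p 1 (G.ends e'.1.1).1 from rfl,
      show ((G.quot (p 1)).ends e'.1).2 = p 1 (G.ends e'.1.1).2 from rfl,
      iterMap_comp p f hcomp, iterMap_comp p f hcomp] at h2
    exact h2⟩
  left_inv e := rfl
  right_inv e' := rfl

include hcomp

lemma quotEdgeEquiv_ends (k : ℕ) (e : (G.quot (p (k + 1))).E) :
    ((G.quot (p 1)).quot (iterMap f k)).ends (quotEdgeEquiv p f hcomp k e)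
      = (((G.quot (p (k + 1))).ends e).1, ((G.quot (p (k + 1))).ends e).2) := by
  show (iterMap f k (p 1 (G.ends e.1).1), iterMap f k (p 1 (G.ends e.1).2)) = _
  rw [iterMap_comp p f hcomp, iterMap_comp p f hcomp]
  rfl

lemma quot_tau_shift (k : ℕ) :
    (G.quot (p (k + 1))).tau = ((G.quot (p 1)).quot (iterMap f k)).tau :=
  tau_congr (H := G.quot (p (k + 1))) (K := (G.quot (p 1)).quot (iterMap f k))
    (Equiv.refl _) (quotEdgeEquiv p f hcomp k) (quotEdgeEquiv_ends p f hcomp k)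

lemma quotEdgeEquiv_image (k : ℕ) (S : Set G.E) :
    (quotEdgeEquiv p f hcomp k) '' (G.crossing (p (k + 1)) S)
      = (G.quot (p 1)).crossing (iterMap f k) (G.crossing (p 1) S) := by
  ext e'
  simp only [Set.mem_image]
  constructor
  · rintro ⟨e, he, rfl⟩
    exact he
  · intro he'
    exact ⟨(quotEdgeEquiv p f hcomp k).symm e', he',
      (quotEdgeEquiv p f hcomp k).apply_symm_apply e'⟩

lemma quot_spanning_shift (k : ℕ) (S : Set G.E) :
    (G.quot (p (k + 1))).IsSpanningTree (G.crossing (p (k + 1)) S) ↔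
      ((G.quot (p 1)).quot (iterMap f k)).IsSpanningTree
        ((G.quot (p 1)).crossing (iterMap f k) (G.crossing (p 1) S)) := by
  rw [← isSpanningTree_map_iff (H := G.quot (p (k + 1)))
    (K := (G.quot (p 1)).quot (iterMap f k)) (Equiv.refl _) (quotEdgeEquiv p f hcomp k)
    (quotEdgeEquiv_ends p f hcomp k), quotEdgeEquiv_image p f hcomp k S]

lemma induced_tau_shift (k : ℕ) (v : L (k + 2)) :
    ((G.quot (p (k + 1))).induced (f (k + 1)) v).tau
      = (((G.quot (p 1)).quot (iterMap f k)).induced (f (k + 1)) v).tau :=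
  tau_induced_congr (H := G.quot (p (k + 1))) (K := (G.quot (p 1)).quot (iterMap f k))
    (Equiv.refl _) (quotEdgeEquiv p f hcomp k)
    (quotEdgeEquiv_ends p f hcomp k) (f (k + 1)) (f (k + 1)) (fun _ => rfl) v

end Shift

/-! ### The main induction -/

theorem aux_count : ∀ (ℓ : ℕ) (G : Multigraph) [Finite G.E] {L : ℕ → Type}
    [∀ n, Fintype (L n)]
    (p : ∀ n, G.V → L n) (f : ∀ n, L n → L (n + 1))
    (_hcomp : ∀ n v, p (n + 1) v = f n (p n v))
    (_hp0 : Function.Bijective (p 0))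
    (_hloopless : ∀ e : G.E, (G.ends e).1 ≠ (G.ends e).2)
    (_hsurj : ∀ n, n ≤ ℓ → Function.Surjective (p n)),
    Nat.card {S : Set G.E // G.IsSpanningTree S ∧
        ∀ m, m < ℓ → (G.quot (p (m + 1))).IsSpanningTree (G.crossing (p (m + 1)) S)}
      = (G.quot (p ℓ)).tau
        * ∏ m ∈ Finset.range ℓ, ∏ v : L (m + 1), ((G.quot (p m)).induced (f m) v).tau := by
  intro ℓ
  induction ℓ with
  | zero =>
    intro G _ L _ p f hcomp hp0 hloopless hsurj
    rw [Finset.prod_range_zero, mul_one]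
    have e1 : Nat.card {S : Set G.E // G.IsSpanningTree S ∧
        ∀ m, m < 0 → (G.quot (p (m + 1))).IsSpanningTree (G.crossing (p (m + 1)) S)}
        = G.tau :=
      Nat.card_congr (Equiv.subtypeEquivRight fun S =>
        ⟨fun h => h.1, fun h => ⟨h, fun m hm => absurd hm (Nat.not_lt_zero m)⟩⟩)
    rw [e1]
    exact tau_congr (H := G) (K := G.quot (p 0)) (Equiv.ofBijective (p 0) hp0)
      ⟨fun e => ⟨e, fun h => hloopless e (hp0.1 h)⟩, fun e' => e'.1,
        fun e => rfl, fun e' => rfl⟩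
      (fun e => rfl)
  | succ ℓ IH =>
    intro G hGE L hLF p f hcomp hp0 hloopless hsurj
    have hsurj1 : Function.Surjective (p 1) := hsurj 1 (by omega)
    have hIH := @IH (G.quot (p 1)) Subtype.finite (fun n => L (n + 1))
      (fun n => hLF (n + 1)) (iterMap f) (fun n => f (n + 1))
      (fun n v => rfl) ⟨fun a b h => h, fun a => ⟨a, rfl⟩⟩
      (fun e => e.2)
      (fun n hn y => by
        obtain ⟨x, hx⟩ := hsurj (n + 1) (by omega) y
        exact ⟨p 1 x, by rw [iterMap_comp p f hcomp]; exact hx⟩)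
    have step1 : Nat.card {S : Set G.E // G.IsSpanningTree S ∧
        ∀ m, m < ℓ + 1 → (G.quot (p (m + 1))).IsSpanningTree (G.crossing (p (m + 1)) S)}
      = Nat.card {S : Set G.E // (G.IsSpanningTree S ∧
          (G.quot (p 1)).IsSpanningTree (G.crossing (p 1) S)) ∧
          (fun T => ∀ m, m < ℓ → ((G.quot (p 1)).quot (iterMap f (m + 1))).IsSpanningTree
            ((G.quot (p 1)).crossing (iterMap f (m + 1)) T)) (G.crossing (p 1) S)} := by
      refine Nat.card_congr (Equiv.subtypeEquivRight fun S => ?_)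
      constructor
      · rintro ⟨h1, h2⟩
        refine ⟨⟨h1, h2 0 (by omega)⟩, fun m hm => ?_⟩
        exact (quot_spanning_shift p f hcomp (m + 1) S).mp (h2 (m + 1) (by omega))
      · rintro ⟨⟨h1, h2⟩, h3⟩
        refine ⟨h1, fun m hm => ?_⟩
        match m with
        | 0 => exact h2
        | (m + 1) => exact (quot_spanning_shift p f hcomp (m + 1) S).mpr (h3 m (by omega))
    have step2 := Nat.card_congr (lemmaA_equiv (π := p 1) hsurj1
      (fun T => ∀ m, m < ℓ → ((G.quot (p 1)).quot (iterMap f (m + 1))).IsSpanningTree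
        ((G.quot (p 1)).crossing (iterMap f (m + 1)) T)))
    rw [step1, step2, Nat.card_prod, Nat.card_pi]
    rw [hIH]
    have hbase : ∀ v : L 1, ((G.quot (p 0)).induced (f 0) v).tau
        = (G.induced (p 1) v).tau := fun v =>
      (tau_induced_congr (H := G) (K := G.quot (p 0)) (Equiv.ofBijective (p 0) hp0)
        ⟨fun e => ⟨e, fun h => hloopless e (hp0.1 h)⟩, fun e' => e'.1,
          fun e => rfl, fun e' => rfl⟩
        (fun e => rfl) (p 1) (f 0) (fun x => (hcomp 0 x).symm) v).symm
    have hsucc : ∏ m ∈ Finset.range (ℓ + 1), ∏ v : L (m + 1),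
        ((G.quot (p m)).induced (f m) v).tau
        = (∏ m ∈ Finset.range ℓ, ∏ v : L (m + 2),
            ((G.quot (p (m + 1))).induced (f (m + 1)) v).tau)
          * ∏ v : L 1, ((G.quot (p 0)).induced (f 0) v).tau :=
      Finset.prod_range_succ' _ ℓ
    rw [hsucc, quot_tau_shift p f hcomp ℓ]
    simp only [induced_tau_shift p f hcomp, hbase]
    simp only [tau]
    ring

end Multigraph

open Multigraph in
/-- Multilevel hierarchical tree count: for a connected loopless graph `G` with a nested
hierarchy of level maps `p n : G.V → L n` (`p 0` a bijection, so level `0` is `G` itself,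
and level `n ≥ 1` quotients given by the block maps `f`), with every level-`n` block
inducing a connected sub-multigraph of the level-`(n-1)` quotient multigraph, the number
of hierarchical spanning trees of `G` equals
`τ(H_ℓ) * ∏_{n = 1}^{ℓ} ∏_{v ∈ V(H_n)} τ(Q⁻¹ v)`. -/
theorem multilevel_hierarchical_tree_count (G : Multigraph) [Finite G.V] [Finite G.E]
    {L : ℕ → Type} [∀ n, Fintype (L n)]
    (p : ∀ n, G.V → L n) (f : ∀ n, L n → L (n + 1))
    (hcomp : ∀ n v, p (n + 1) v = f n (p n v))
    (hp0 : Function.Bijective (p 0))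
    (hloopless : ∀ e : G.E, (G.ends e).1 ≠ (G.ends e).2)
    (ℓ : ℕ)
    (hconn : G.Connects Set.univ)
    (hsurj : ∀ n, n ≤ ℓ → Function.Surjective (p n))
    (hblocks : ∀ m, m < ℓ → ∀ v : L (m + 1),
      ((G.quot (p m)).induced (f m) v).Connects Set.univ) :
    Nat.card {S : Set G.E // G.IsSpanningTree S ∧
        ∀ m, m < ℓ → (G.quot (p (m + 1))).IsSpanningTree (G.crossing (p (m + 1)) S)}
      = (G.quot (p ℓ)).tau
          * ∏ m ∈ Finset.range ℓ, ∏ v : L (m + 1), ((G.quot (p m)).induced (f m) v).tau :=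
  Multigraph.aux_count ℓ G p f hcomp hp0 hloopless hsurj
end
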